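/- arXiv:1011.6302 — 4 statements merged into one kernel-verified Lean document; each statement's English description precedes it below -/
import Mathlib

section
/- Let I be a real interval with [0,1] ⊆ I ⊆ ℝ₊ and let f : Iⁿ → ℝ be a nonconstant quasi-Lovász extension, f = L ∘ φ. Then the following are equivalent: (i) f_0 is weakly homogeneous; (ii) there exists A ⊆ [n] such that f_0(1_A) ≠ 0; (iii) φ(1) ≠ 0. In this case, f_0(x·1_A) = (φ(x)/φ(1))·f_0(1_A) for every x ∈ I and every A ⊆ [n]. -/
/-!
On a ray `c • 1_A` with `c ≥ 0` a Lovász extension is affine in `c`: only the terms with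
`∅ ≠ B ⊆ A` survive and each contributes `a_ψ(B) · c`. Hence `f₀(x • 1_A) = φ(x) · S(A)` with
`S(A) = Σ_{∅ ≠ B ⊆ A} a_ψ(B)`. If `S` vanished identically, so would every `a_ψ(B)` with
`B ≠ ∅`, and `f` would be constant; if `φ` vanished on `I`, `f` would be constant as well.
With some `S(A) ≠ 0` and `φ(x) ≠ 0` in hand, all three conditions reduce to `φ(1) ≠ 0`, and
`χ = φ / φ(1)` witnesses weak homogeneity.
-/

open Finset

/-- The indicator tuple `1_A` of a subset `A ⊆ [n]`. -/
def ind {n : ℕ} (A : Finset (Fin n)) : Fin n → ℝ := fun i => if i ∈ A then 1 else 0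

/-- The Möbius transform of a pseudo-Boolean function (viewed as a set function). -/
def mobius {n : ℕ} (ψ : Finset (Fin n) → ℝ) (A : Finset (Fin n)) : ℝ :=
  ∑ B ∈ A.powerset, (-1 : ℝ) ^ (A.card - B.card) * ψ B

/-- `min_{i ∈ A} x i` (with value `0` for `A = ∅`). -/
def minOnFin {n : ℕ} (A : Finset (Fin n)) (x : Fin n → ℝ) : ℝ :=
  if h : A.Nonempty then A.inf' h x else 0

/-- The Lovász extension of a pseudo-Boolean function `ψ` (viewed as a set function):
`L_ψ(x) = a_ψ(∅) + Σ_{∅ ≠ A ⊆ [n]} a_ψ(A) · min_{i ∈ A} x_i`. -/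
def Lov {n : ℕ} (ψ : Finset (Fin n) → ℝ) (x : Fin n → ℝ) : ℝ :=
  mobius ψ ∅ + ∑ A : Finset (Fin n), mobius ψ A * minOnFin A x

/-- `x ∈ ℝⁿ_σ`, i.e. `x_{σ(1)} ≤ ⋯ ≤ x_{σ(n)}`. -/
def inRσ {n : ℕ} (σ : Equiv.Perm (Fin n)) (x : Fin n → ℝ) : Prop :=
  ∀ i j : Fin n, i ≤ j → x (σ i) ≤ x (σ j)

/-- `A_σ^↑(k) = {σ(j) : j ≥ k}` (0-indexed; `Aup σ n = ∅`). -/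
def Aup {n : ℕ} (σ : Equiv.Perm (Fin n)) (k : ℕ) : Finset (Fin n) :=
  (Finset.univ.filter fun j : Fin n => k ≤ (j : ℕ)).image σ

/-- `A_σ^↓(k) = {σ(j) : j < k}` (0-indexed; `Adown σ 0 = ∅`). -/
def Adown {n : ℕ} (σ : Equiv.Perm (Fin n)) (k : ℕ) : Finset (Fin n) :=
  (Finset.univ.filter fun j : Fin n => (j : ℕ) < k).image σ

/-- Weak homogeneity of `h : Iⁿ → ℝ` for `I ⊆ ℝ₊`: there exists a nondecreasing `χ : I → ℝ`
with `χ(0) = 0` such that `h(x·1_A) = χ(x)·h(1_A)` for every `x ∈ I`, `A ⊆ [n]`. -/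
def WeaklyHomPos {n : ℕ} (I : Set ℝ) (h : (Fin n → ℝ) → ℝ) : Prop :=
  ∃ χ : ℝ → ℝ, MonotoneOn χ I ∧ χ 0 = 0 ∧
    ∀ x ∈ I, ∀ A : Finset (Fin n), h (fun i => x * ind A i) = χ x * h (ind A)

def nonemptyMobiusSum {n : ℕ} (ψ : Finset (Fin n) → ℝ) (A : Finset (Fin n)) : ℝ :=
  ∑ B ∈ A.powerset with B.Nonempty, mobius ψ B

section Lovasz

variable {n : ℕ}

lemma minOnFin_smul_ind (A B : Finset (Fin n)) {c : ℝ} (hc : 0 ≤ c) :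
    minOnFin B (fun i => c * ind A i) = if B.Nonempty ∧ B ⊆ A then c else 0 := by
  unfold minOnFin
  by_cases hB : B.Nonempty
  swap
  · simp [hB]
  rw [dif_pos hB]
  by_cases hBA : B ⊆ A
  · rw [if_pos ⟨hB, hBA⟩, Finset.inf'_congr hB (g := fun _ => c) rfl
      (fun i hi => by simp [ind, hBA hi]), Finset.inf'_const]
  · rw [if_neg (fun h => hBA h.2)]
    obtain ⟨i, hiB, hiA⟩ := Finset.not_subset.mp hBA
    refine le_antisymm ((Finset.inf'_le _ hiB).trans_eq (by simp [ind, hiA])) ?_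
    exact Finset.le_inf' _ _ fun j _ => by unfold ind; split_ifs <;> simp [hc]

lemma Lov_smul_ind (ψ : Finset (Fin n) → ℝ) (A : Finset (Fin n)) {c : ℝ} (hc : 0 ≤ c) :
    Lov ψ (fun i => c * ind A i) = mobius ψ ∅ + c * nonemptyMobiusSum ψ A := by
  have hfilter : (univ.filter fun B : Finset (Fin n) => B.Nonempty ∧ B ⊆ A) =
      A.powerset.filter (·.Nonempty) := by
    ext B; simp [and_comm]
  rw [Lov, nonemptyMobiusSum, Finset.mul_sum, ← hfilter, Finset.sum_filter]
  congr 1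
  refine Finset.sum_congr rfl fun B _ => ?_
  rw [minOnFin_smul_ind A B hc, mul_ite, mul_zero, mul_comm]

lemma mobius_eq_zero_of_nonemptyMobiusSum_eq_zero {ψ : Finset (Fin n) → ℝ}
    (hS : ∀ A, nonemptyMobiusSum ψ A = 0) {B : Finset (Fin n)} (hB : B.Nonempty) :
    mobius ψ B = 0 := by
  induction B using Finset.strongInduction with
  | H B ih =>
    have hBmem : B ∈ B.powerset.filter (·.Nonempty) := by simp [hB]
    have hproper : ∑ C ∈ (B.powerset.filter (·.Nonempty)).erase B, mobius ψ C = 0 := by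
      refine Finset.sum_eq_zero fun C hC => ?_
      obtain ⟨hCB, hCne⟩ := Finset.mem_filter.mp (Finset.mem_of_mem_erase hC)
      exact ih C (Finset.ssubset_iff_subset_ne.mpr
        ⟨Finset.mem_powerset.mp hCB, Finset.ne_of_mem_erase hC⟩) hCne
    simpa [nonemptyMobiusSum, ← Finset.sum_erase_add _ _ hBmem, hproper] using hS B

lemma Lov_eq_of_nonemptyMobiusSum_eq_zero {ψ : Finset (Fin n) → ℝ}
    (hS : ∀ A, nonemptyMobiusSum ψ A = 0) (x : Fin n → ℝ) : Lov ψ x = mobius ψ ∅ := by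
  rw [Lov, Finset.sum_eq_zero, add_zero]
  intro B _
  by_cases hB : B.Nonempty
  · rw [mobius_eq_zero_of_nonemptyMobiusSum_eq_zero hS hB, zero_mul]
  · rw [minOnFin, dif_neg hB, mul_zero]

end Lovasz

lemma weaklyHomPos_of_forall_eq_mul {n : ℕ} {I : Set ℝ} {h : (Fin n → ℝ) → ℝ}
    {φ : ℝ → ℝ} {s : Finset (Fin n) → ℝ} (h1I : (1 : ℝ) ∈ I) (hφ : MonotoneOn φ I)
    (hφ0 : φ 0 = 0) (hφ1 : 0 < φ 1)
    (hh : ∀ x ∈ I, ∀ A, h (fun i => x * ind A i) = φ x * s A) : WeaklyHomPos I h := by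
  refine ⟨fun x => φ x / φ 1, fun a ha b hb hab => div_le_div_of_nonneg_right (hφ ha hb hab)
    hφ1.le, by simp [hφ0], fun x hx A => ?_⟩
  have h1 : h (ind A) = φ 1 * s A := by simpa using hh 1 h1I A
  rw [hh x hx A, h1]
  field_simp

section QuasiLovasz

variable {n : ℕ} {I : Set ℝ} {f : (Fin n → ℝ) → ℝ} {ψ : Finset (Fin n) → ℝ} {φ : ℝ → ℝ}

lemma QuasiLovasz.sub_zero_smul_ind
    (hf : ∀ x : Fin n → ℝ, (∀ i, x i ∈ I) → f x = Lov ψ (fun i => φ (x i)))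
    (h0I : (0 : ℝ) ∈ I) (hIpos : I ⊆ Set.Ici 0) (hφ : MonotoneOn φ I) (hφ0 : φ 0 = 0)
    {x : ℝ} (hx : x ∈ I) (A : Finset (Fin n)) :
    f (fun i => x * ind A i) - f (fun _ => 0) = φ x * nonemptyMobiusSum ψ A := by
  have hφx : 0 ≤ φ x := hφ0 ▸ hφ h0I hx (hIpos hx)
  have hmem : ∀ i, x * ind A i ∈ I := fun i => by unfold ind; split_ifs <;> simp [hx, h0I]
  have hφA : (fun i => φ (x * ind A i)) = fun i => φ x * ind A i := by
    funext i; unfold ind; split_ifs <;> simp [hφ0]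
  have hφzero : (fun _ : Fin n => φ 0) = fun i => 0 * ind A i := by simp [hφ0]
  rw [hf _ hmem, hf _ fun _ => h0I, hφA, hφzero, Lov_smul_ind ψ A hφx, Lov_smul_ind ψ A le_rfl]
  ring

lemma QuasiLovasz.exists_nonemptyMobiusSum_ne_zero
    (hf : ∀ x : Fin n → ℝ, (∀ i, x i ∈ I) → f x = Lov ψ (fun i => φ (x i)))
    (hnc : ∃ x y : Fin n → ℝ, (∀ i, x i ∈ I) ∧ (∀ i, y i ∈ I) ∧ f x ≠ f y) :
    ∃ A, nonemptyMobiusSum ψ A ≠ 0 := by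
  by_contra! hS
  obtain ⟨x, y, hx, hy, hxy⟩ := hnc
  rw [hf x hx, hf y hy, Lov_eq_of_nonemptyMobiusSum_eq_zero hS,
    Lov_eq_of_nonemptyMobiusSum_eq_zero hS] at hxy
  exact hxy rfl

lemma QuasiLovasz.exists_apply_ne_zero
    (hf : ∀ x : Fin n → ℝ, (∀ i, x i ∈ I) → f x = Lov ψ (fun i => φ (x i)))
    (hnc : ∃ x y : Fin n → ℝ, (∀ i, x i ∈ I) ∧ (∀ i, y i ∈ I) ∧ f x ≠ f y) :
    ∃ x ∈ I, φ x ≠ 0 := by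
  by_contra! hφ
  obtain ⟨x, y, hx, hy, hxy⟩ := hnc
  have hcomp : ∀ z : Fin n → ℝ, (∀ i, z i ∈ I) → (fun i => φ (z i)) = fun _ => 0 :=
    fun z hz => funext fun i => hφ _ (hz i)
  rw [hf x hx, hf y hy, hcomp x hx, hcomp y hy] at hxy
  exact hxy rfl

end QuasiLovasz

theorem stmt4_general {n : ℕ} (I : Set ℝ)
    (hI1 : Set.Icc (0 : ℝ) 1 ⊆ I) (hIpos : I ⊆ Set.Ici (0 : ℝ))
    (f L : (Fin n → ℝ) → ℝ) (φ : ℝ → ℝ)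
    (hL : ∃ ψ : Finset (Fin n) → ℝ, L = Lov ψ)
    (hφ : MonotoneOn φ I) (hφ0 : φ 0 = 0)
    (hf : ∀ x : Fin n → ℝ, (∀ i, x i ∈ I) → f x = L (fun i => φ (x i)))
    (hnc : ∃ x y : Fin n → ℝ, (∀ i, x i ∈ I) ∧ (∀ i, y i ∈ I) ∧ f x ≠ f y) :
    (WeaklyHomPos I (fun y => f y - f (fun _ => 0)) ↔
       ∃ A : Finset (Fin n), f (ind A) - f (fun _ => 0) ≠ 0) ∧
    ((∃ A : Finset (Fin n), f (ind A) - f (fun _ => 0) ≠ 0) ↔ φ 1 ≠ 0) ∧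
    (φ 1 ≠ 0 → ∀ x ∈ I, ∀ A : Finset (Fin n),
      f (fun i => x * ind A i) - f (fun _ => 0) =
        (φ x / φ 1) * (f (ind A) - f (fun _ => 0))) := by
  obtain ⟨ψ, rfl⟩ := hL
  have h0I : (0 : ℝ) ∈ I := hI1 ⟨le_rfl, zero_le_one⟩
  have h1I : (1 : ℝ) ∈ I := hI1 ⟨zero_le_one, le_rfl⟩
  have hscale := fun x (hx : x ∈ I) => QuasiLovasz.sub_zero_smul_ind hf h0I hIpos hφ hφ0 hx
  have hind : ∀ A, f (ind A) - f (fun _ => 0) = φ 1 * nonemptyMobiusSum ψ A := by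
    simpa using hscale 1 h1I
  obtain ⟨A₀, hA₀⟩ := QuasiLovasz.exists_nonemptyMobiusSum_ne_zero hf hnc
  obtain ⟨x₀, hx₀, hφx₀⟩ := QuasiLovasz.exists_apply_ne_zero hf hnc
  have hiii : (∃ A, f (ind A) - f (fun _ => 0) ≠ 0) ↔ φ 1 ≠ 0 := by
    simp only [hind]
    exact ⟨fun ⟨_, hA⟩ => left_ne_zero_of_mul hA, fun h1 => ⟨A₀, mul_ne_zero h1 hA₀⟩⟩
  refine ⟨⟨fun ⟨χ, _, _, hχ⟩ => hiii.2 fun h1 => ?_, fun hii => ?_⟩, hiii, fun h1 x hx A => ?_⟩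
  · have h : f (fun i => x₀ * ind A₀ i) - f (fun _ => 0) =
        χ x₀ * (f (ind A₀) - f (fun _ => 0)) := hχ x₀ hx₀ A₀
    rw [hscale x₀ hx₀ A₀, hind, h1, zero_mul, mul_zero] at h
    exact mul_ne_zero hφx₀ hA₀ h
  · have hφ1 : 0 < φ 1 := (hφ0 ▸ hφ h0I h1I zero_le_one).lt_of_ne' (hiii.1 hii)
    exact weaklyHomPos_of_forall_eq_mul h1I hφ hφ0 hφ1 hscale
  · rw [hscale x hx A, hind A]
    field_simp

/-- For a nonconstant quasi-Lovász extension `f = L ∘ φ` on `Iⁿ`,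
`[0,1] ⊆ I ⊆ ℝ₊`: (i) `f_0` weakly homogeneous ↔ (ii) `f_0(1_A) ≠ 0` for some `A`
↔ (iii) `φ(1) ≠ 0`; and in this case `f_0(x·1_A) = (φ(x)/φ(1))·f_0(1_A)`. -/
theorem stmt4 {n : ℕ} (I : Set ℝ) (hI : I.OrdConnected)
    (hI1 : Set.Icc (0 : ℝ) 1 ⊆ I) (hIpos : I ⊆ Set.Ici (0 : ℝ))
    (f L : (Fin n → ℝ) → ℝ) (φ : ℝ → ℝ)
    (hL : ∃ ψ : Finset (Fin n) → ℝ, L = Lov ψ)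
    (hφ : MonotoneOn φ I) (hφ0 : φ 0 = 0)
    (hf : ∀ x : Fin n → ℝ, (∀ i, x i ∈ I) → f x = L (fun i => φ (x i)))
    (hnc : ∃ x y : Fin n → ℝ, (∀ i, x i ∈ I) ∧ (∀ i, y i ∈ I) ∧ f x ≠ f y) :
    (WeaklyHomPos I (fun y => f y - f (fun _ => 0)) ↔
       ∃ A : Finset (Fin n), f (ind A) - f (fun _ => 0) ≠ 0) ∧
    ((∃ A : Finset (Fin n), f (ind A) - f (fun _ => 0) ≠ 0) ↔ φ 1 ≠ 0) ∧
    (φ 1 ≠ 0 → ∀ x ∈ I, ∀ A : Finset (Fin n),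
      f (fun i => x * ind A i) - f (fun _ => 0) =
        (φ x / φ 1) * (f (ind A) - f (fun _ => 0))) :=
  stmt4_general I hI1 hIpos f L φ hL hφ hφ0 hf hnc
end

section
/- Let I be a real interval with [−1,0] ⊆ I ⊆ ℝ₋ and let f : Iⁿ → ℝ be a nonconstant quasi-Lovász extension, f = L ∘ φ. Then the following are equivalent: (i) f_0 is weakly homogeneous; (ii) there exists A ⊆ [n] such that f_0(−1_A) ≠ 0; (iii) φ(−1) ≠ 0. In this case, f_0(x·1_A) = (φ(x)/φ(−1))·f_0(−1_A) for every x ∈ I and every A ⊆ [n]. -/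
open Finset

/-- Weak homogeneity of `h : Iⁿ → ℝ` for `I ⊆ ℝ₋`: there exists a nondecreasing `χ : I → ℝ`
with `χ(0) = 0` such that `h(x·1_A) = −χ(x)·h(−1_A)` for every `x ∈ I`, `A ⊆ [n]`. -/
def WeaklyHomNeg {n : ℕ} (I : Set ℝ) (h : (Fin n → ℝ) → ℝ) : Prop :=
  ∃ χ : ℝ → ℝ, MonotoneOn χ I ∧ χ 0 = 0 ∧
    ∀ x ∈ I, ∀ A : Finset (Fin n),
      h (fun i => x * ind A i) = -(χ x) * h (fun i => -(ind A i))

/-!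
On `x · 1_A` with `x ≤ 0`, `min_{i ∈ B}` equals `x` if `B` meets `A` and `0` otherwise, so
`f₀(x · 1_A) = φ(x) · S(A)`, where `S(A)` is the sum of the Möbius coefficients of the sets
meeting `A`. Nonconstancy forces some `S(A) ≠ 0`: `S(univ) - S(Aᶜ)` is the sum of the Möbius
coefficients of the nonempty subsets of `A`, so `S ≡ 0` kills every nonempty coefficient and
makes the Lovász extension constant. Hence (ii) ⟺ (iii); under (iii) the formula holds and
`χ = -φ / φ(-1)` witnesses weak homogeneity, while if `φ(-1) = 0` weak homogeneity forces
`φ ≡ 0` on `I`, again making `f` constant.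
-/

theorem Finset.eq_zero_of_forall_sum_powerset_eq_zero {α M : Type*} [DecidableEq α]
    [AddCommGroup M] {g : Finset α → M} (h : ∀ C : Finset α, ∑ B ∈ C.powerset, g B = 0)
    (C : Finset α) : g C = 0 := by
  induction C using strongInduction with
  | H C ih =>
    have hsplit := add_sum_erase C.powerset g (mem_powerset_self C)
    rw [h C, sum_eq_zero fun B hB => ih B ?_, add_zero] at hsplit
    · exact hsplit
    · rw [mem_erase, mem_powerset] at hB
      exact ssubset_iff_subset_ne.2 ⟨hB.2, hB.1⟩

section Lovasz

variable {n : ℕ}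

noncomputable def mobiusSumMeeting (ψ : Finset (Fin n) → ℝ) (A : Finset (Fin n)) : ℝ :=
  ∑ B ∈ univ.filter fun B => ¬Disjoint B A, mobius ψ B

theorem minOnFin_mul_ind {c : ℝ} (hc : c ≤ 0) (A B : Finset (Fin n)) :
    minOnFin B (fun i => c * ind A i) = if Disjoint B A then 0 else c := by
  unfold minOnFin
  split_ifs with hB hdisj hdisj
  · have hzero : ∀ i ∈ B, c * ind A i = 0 := fun i hi => by
      simp [ind, disjoint_left.1 hdisj hi]
    obtain ⟨j, hj⟩ := hB
    exact le_antisymm (inf'_le_of_le _ hj (hzero j hj).le)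
      (le_inf' _ _ fun i hi => (hzero i hi).ge)
  · obtain ⟨j, hjB, hjA⟩ := not_disjoint_iff.1 hdisj
    refine le_antisymm (inf'_le_of_le _ hjB (by simp [ind, hjA]))
      (le_inf' _ _ fun i _ => ?_)
    unfold ind
    split_ifs <;> simp [hc]
  · rfl
  · exact absurd (not_nonempty_iff_eq_empty.1 hB ▸ disjoint_empty_left A) hdisj

theorem Lov_mul_ind (ψ : Finset (Fin n) → ℝ) {c : ℝ} (hc : c ≤ 0) (A : Finset (Fin n)) :
    Lov ψ (fun i => c * ind A i) = mobius ψ ∅ + c * mobiusSumMeeting ψ A := by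
  simp only [Lov, minOnFin_mul_ind hc, mobiusSumMeeting, sum_filter, mul_ite, mul_zero,
    mul_sum]
  congr 1
  exact sum_congr rfl fun B _ => by split_ifs <;> ring

theorem Lov_zero (ψ : Finset (Fin n) → ℝ) : Lov ψ (fun _ => 0) = mobius ψ ∅ := by
  simpa using Lov_mul_ind ψ le_rfl ∅

theorem mobiusSumMeeting_univ_sub_compl (ψ : Finset (Fin n) → ℝ) (C : Finset (Fin n)) :
    mobiusSumMeeting ψ univ - mobiusSumMeeting ψ Cᶜ =
      ∑ B ∈ C.powerset, if B.Nonempty then mobius ψ B else 0 := by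
  have hterm : ∀ B : Finset (Fin n),
      ((if ¬Disjoint B univ then mobius ψ B else 0) -
          if ¬Disjoint B Cᶜ then mobius ψ B else 0) =
        if B ⊆ C then (if B.Nonempty then mobius ψ B else 0) else 0 := fun B => by
    simp only [← top_eq_univ, disjoint_top, bot_eq_empty, disjoint_compl_right_iff,
      ← not_nonempty_iff_eq_empty]
    split_ifs <;> simp_all
  rw [mobiusSumMeeting, mobiusSumMeeting, ← filter_subset_univ, sum_filter, sum_filter, sum_filter,
    ← sum_sub_distrib]
  exact sum_congr rfl fun B _ => hterm B

theorem mobius_eq_zero_of_mobiusSumMeeting_eq_zero {ψ : Finset (Fin n) → ℝ}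
    (h : ∀ A, mobiusSumMeeting ψ A = 0) {B : Finset (Fin n)} (hB : B.Nonempty) :
    mobius ψ B = 0 := by
  have := eq_zero_of_forall_sum_powerset_eq_zero
    (g := fun B => if B.Nonempty then mobius ψ B else 0)
    (fun C => by rw [← mobiusSumMeeting_univ_sub_compl, h, h, sub_self]) B
  simpa [hB] using this

theorem Lov_eq_mobius_empty_of_mobiusSumMeeting_eq_zero {ψ : Finset (Fin n) → ℝ}
    (h : ∀ A, mobiusSumMeeting ψ A = 0) (x : Fin n → ℝ) : Lov ψ x = mobius ψ ∅ := by
  rw [Lov, add_eq_left]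
  refine sum_eq_zero fun B _ => ?_
  by_cases hB : B.Nonempty
  · rw [mobius_eq_zero_of_mobiusSumMeeting_eq_zero h hB, zero_mul]
  · rw [minOnFin, dif_neg hB, mul_zero]

theorem exists_mobiusSumMeeting_ne_zero {ψ : Finset (Fin n) → ℝ} {x y : Fin n → ℝ}
    (hxy : Lov ψ x ≠ Lov ψ y) : ∃ A, mobiusSumMeeting ψ A ≠ 0 := by
  by_contra! h
  exact hxy <| by rw [Lov_eq_mobius_empty_of_mobiusSumMeeting_eq_zero h,
    Lov_eq_mobius_empty_of_mobiusSumMeeting_eq_zero h]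

theorem quasiLov_mul_ind_sub_zero {I : Set ℝ} {f : (Fin n → ℝ) → ℝ} {ψ : Finset (Fin n) → ℝ}
    {φ : ℝ → ℝ} (hf : ∀ x : Fin n → ℝ, (∀ i, x i ∈ I) → f x = Lov ψ (fun i => φ (x i)))
    (hφ0 : φ 0 = 0) (h0 : (0 : ℝ) ∈ I) {x : ℝ} (hx : x ∈ I) (hφx : φ x ≤ 0)
    (A : Finset (Fin n)) :
    f (fun i => x * ind A i) - f (fun _ => 0) = φ x * mobiusSumMeeting ψ A := by
  have hmem : ∀ i, x * ind A i ∈ I := fun i => by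
    unfold ind
    split_ifs <;> simpa
  have hφind : (fun i => φ (x * ind A i)) = fun i => φ x * ind A i := funext fun i => by
    unfold ind
    split_ifs <;> simp [hφ0]
  rw [hf _ hmem, hf _ fun _ => h0, hφind, hφ0, Lov_mul_ind ψ hφx, Lov_zero]
  ring

theorem weaklyHomNeg_of_eq_div_mul {I : Set ℝ} {h : (Fin n → ℝ) → ℝ} {φ : ℝ → ℝ}
    (hφ : MonotoneOn φ I) (hφ0 : φ 0 = 0) (hφ1 : φ (-1) < 0)
    (hh : ∀ x ∈ I, ∀ A : Finset (Fin n),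
      h (fun i => x * ind A i) = (φ x / φ (-1)) * h (fun i => -(ind A i))) :
    WeaklyHomNeg I h := by
  refine ⟨fun t => -(φ t / φ (-1)), fun a ha b hb hab => ?_, by simp [hφ0],
    fun x hx A => by simpa using hh x hx A⟩
  simpa only [neg_le_neg_iff] using div_le_div_of_nonpos_of_le hφ1.le (hφ ha hb hab)

end Lovasz

theorem stmt6_general {n : ℕ} (I : Set ℝ)
    (hI1 : Set.Icc (-1 : ℝ) 0 ⊆ I) (hIneg : I ⊆ Set.Iic (0 : ℝ))
    (f L : (Fin n → ℝ) → ℝ) (φ : ℝ → ℝ)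
    (hL : ∃ ψ : Finset (Fin n) → ℝ, L = Lov ψ)
    (hφ : MonotoneOn φ I) (hφ0 : φ 0 = 0)
    (hf : ∀ x : Fin n → ℝ, (∀ i, x i ∈ I) → f x = L (fun i => φ (x i)))
    (hnc : ∃ x y : Fin n → ℝ, (∀ i, x i ∈ I) ∧ (∀ i, y i ∈ I) ∧ f x ≠ f y) :
    (WeaklyHomNeg I (fun y => f y - f (fun _ => 0)) ↔
       ∃ A : Finset (Fin n), f (fun i => -(ind A i)) - f (fun _ => 0) ≠ 0) ∧
    ((∃ A : Finset (Fin n), f (fun i => -(ind A i)) - f (fun _ => 0) ≠ 0) ↔ φ (-1) ≠ 0) ∧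
    (φ (-1) ≠ 0 → ∀ x ∈ I, ∀ A : Finset (Fin n),
      f (fun i => x * ind A i) - f (fun _ => 0) =
        (φ x / φ (-1)) * (f (fun i => -(ind A i)) - f (fun _ => 0))) := by
  obtain ⟨ψ, rfl⟩ := hL
  have h0 : (0 : ℝ) ∈ I := hI1 ⟨by norm_num, le_rfl⟩
  have hm1 : (-1 : ℝ) ∈ I := hI1 ⟨le_rfl, by norm_num⟩
  have hφnonpos : ∀ x ∈ I, φ x ≤ 0 := fun x hx => hφ0 ▸ hφ hx h0 (hIneg hx)
  have hscale : ∀ x ∈ I, ∀ A, f (fun i => x * ind A i) - f (fun _ => 0) =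
      φ x * mobiusSumMeeting ψ A := fun x hx =>
    quasiLov_mul_ind_sub_zero hf hφ0 h0 hx (hφnonpos x hx)
  have hneg : ∀ A, f (fun i => -(ind A i)) - f (fun _ => 0) = φ (-1) * mobiusSumMeeting ψ A := by
    simpa only [neg_one_mul] using hscale (-1) hm1
  obtain ⟨u, v, hu, hv, huv⟩ := hnc
  obtain ⟨A₀, hA₀⟩ : ∃ A, mobiusSumMeeting ψ A ≠ 0 :=
    exists_mobiusSumMeeting_ne_zero (by rwa [hf u hu, hf v hv] at huv)
  obtain ⟨z, hz, hφz⟩ : ∃ z ∈ I, φ z ≠ 0 := by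
    by_contra! hφI
    exact huv <| by simp only [hf u hu, hf v hv, hφI _ (hu _), hφI _ (hv _)]
  have hnonzero : (∃ A, f (fun i => -(ind A i)) - f (fun _ => 0) ≠ 0) ↔ φ (-1) ≠ 0 := by
    simp only [hneg, mul_ne_zero_iff]
    exact ⟨fun ⟨_, h, _⟩ => h, fun h => ⟨A₀, h, hA₀⟩⟩
  have hformula : φ (-1) ≠ 0 → ∀ x ∈ I, ∀ A, f (fun i => x * ind A i) - f (fun _ => 0) =
      (φ x / φ (-1)) * (f (fun i => -(ind A i)) - f (fun _ => 0)) := fun h x hx A => by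
    rw [hscale x hx, hneg]
    field_simp
  refine ⟨⟨fun ⟨χ, _, _, hχ⟩ => hnonzero.2 fun h => ?_, fun h => ?_⟩, hnonzero, hformula⟩
  · have hz₀ : f (fun i => z * ind A₀ i) - f (fun _ => 0) =
        -χ z * (f (fun i => -(ind A₀ i)) - f (fun _ => 0)) := hχ z hz A₀
    rw [hscale z hz, hneg, h, zero_mul, mul_zero] at hz₀
    exact mul_ne_zero hφz hA₀ hz₀
  · have hφ1 : φ (-1) < 0 := (hφnonpos _ hm1).lt_of_ne (hnonzero.1 h)
    exact weaklyHomNeg_of_eq_div_mul hφ hφ0 hφ1 (hformula hφ1.ne)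

/-- For a nonconstant quasi-Lovász extension `f = L ∘ φ` on `Iⁿ`,
`[−1,0] ⊆ I ⊆ ℝ₋`: (i) `f_0` weakly homogeneous ↔ (ii) `f_0(−1_A) ≠ 0` for some `A`
↔ (iii) `φ(−1) ≠ 0`; and in this case `f_0(x·1_A) = (φ(x)/φ(−1))·f_0(−1_A)`. -/
theorem stmt6 {n : ℕ} (I : Set ℝ) (hI : I.OrdConnected)
    (hI1 : Set.Icc (-1 : ℝ) 0 ⊆ I) (hIneg : I ⊆ Set.Iic (0 : ℝ))
    (f L : (Fin n → ℝ) → ℝ) (φ : ℝ → ℝ)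
    (hL : ∃ ψ : Finset (Fin n) → ℝ, L = Lov ψ)
    (hφ : MonotoneOn φ I) (hφ0 : φ 0 = 0)
    (hf : ∀ x : Fin n → ℝ, (∀ i, x i ∈ I) → f x = L (fun i => φ (x i)))
    (hnc : ∃ x y : Fin n → ℝ, (∀ i, x i ∈ I) ∧ (∀ i, y i ∈ I) ∧ f x ≠ f y) :
    (WeaklyHomNeg I (fun y => f y - f (fun _ => 0)) ↔
       ∃ A : Finset (Fin n), f (fun i => -(ind A i)) - f (fun _ => 0) ≠ 0) ∧
    ((∃ A : Finset (Fin n), f (fun i => -(ind A i)) - f (fun _ => 0) ≠ 0) ↔ φ (-1) ≠ 0) ∧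
    (φ (-1) ≠ 0 → ∀ x ∈ I, ∀ A : Finset (Fin n),
      f (fun i => x * ind A i) - f (fun _ => 0) =
        (φ x / φ (-1)) * (f (fun i => -(ind A i)) - f (fun _ => 0))) :=
  stmt6_general I hI1 hIneg f L φ hL hφ hφ0 hf hnc
end

section
/- Let I ⊆ ℝ₋ = (−∞,0] be a real interval containing 0 and let f : Iⁿ → ℝ. Then the following are equivalent: (i) f is comonotonically modular; (ii) f is invariant under horizontal max-differences; (iii) there exists a function g : Iⁿ → ℝ such that for every permutation σ of [n] and every x ∈ Iⁿ ∩ ℝⁿ_σ, f(x) = g(0,…,0) + Σ_{i=1}^{n} (g(x_{σ(i)}·1_{A_σ^↓(i)}) − g(x_{σ(i)}·1_{A_σ^↓(i−1)})). Moreover, in (iii) one can choose g = f. -/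
/-!
For `x` ordered by `σ`, write `x⁽ᵏ⁾` for `x` with all but its `k` smallest coordinates set to `0`
(so `x⁽⁰⁾ = 0`, `x⁽ⁿ⁾ = x`), and `c·1ₖ` for `c` times the indicator of `A_σ^↓(k)`. Comonotonic
modularity applied to `x⁽ᵏ⁾` and `x_{σ(k)}·1ₖ₊₁`, whose meet is `x⁽ᵏ⁺¹⁾` and join `x_{σ(k)}·1ₖ`,
gives `f(x⁽ᵏ⁺¹⁾) - f(x_{σ(k)}·1ₖ₊₁) = f(x⁽ᵏ⁾) - f(x_{σ(k)}·1ₖ)`, and summing over `k` yields (iii)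
with `g = f`. Invariance under horizontal max-differences with `c = x_{σ(k)}`, applied to `x⁽ᵏ⁺¹⁾`,
gives the same identity with `x⁽ᵐ⁾` and `c·1ₘ` on the right, where `m` starts the block of
coordinates equal to `c`; the step terms telescope across that block, so strong induction on `k`
again yields (iii). Conversely each summand of (iii) depends on the single coordinate `x_{σ(i)}`,
which makes the right-hand side modular on comonotonic pairs, and (i) ⇒ (ii) is modularity applied
to `x ∨ c` and `[x]^c`, whose meet is `x` and join is `[x]^c ∨ c`.
-/

open Finset

/-- `f` is comonotonically modular on `Iⁿ`:
`f(x) + f(x′) = f(x ∧ x′) + f(x ∨ x′)` for all comonotonic `x, x′ ∈ Iⁿ`. -/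
def ComonModular {n : ℕ} (I : Set ℝ) (f : (Fin n → ℝ) → ℝ) : Prop :=
  ∀ σ : Equiv.Perm (Fin n), ∀ x y : Fin n → ℝ,
    (∀ i, x i ∈ I) → (∀ i, y i ∈ I) → inRσ σ x → inRσ σ y →
    f x + f y = f (fun i => min (x i) (y i)) + f (fun i => max (x i) (y i))

/-- `f` is invariant under horizontal max-differences on `Iⁿ` (`I ⊆ ℝ₋`):
`f(x) − f(x ∨ c) = f([x]^c) − f([x]^c ∨ c)` for every `x ∈ Iⁿ` and `c ∈ I`. -/
def InvHMax {n : ℕ} (I : Set ℝ) (f : (Fin n → ℝ) → ℝ) : Prop :=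
  ∀ x : Fin n → ℝ, (∀ i, x i ∈ I) → ∀ c ∈ I,
    f x - f (fun i => max (x i) c) =
      f (fun i => if c ≤ x i then 0 else x i) -
      f (fun i => max (if c ≤ x i then 0 else x i) c)

section

variable {n : ℕ}

theorem sum_range_eq_of_block_step {T : ℕ → ℝ} {F : ℝ → ℕ → ℝ} {a : ℕ → ℝ} {N : ℕ}
    (h : ∀ k < N, ∃ m ≤ k, (∀ i, m ≤ i → i ≤ k → a i = a k) ∧
      T (k + 1) - F (a k) (k + 1) = T m - F (a k) m) :
    ∀ k ≤ N, T k = T 0 + ∑ i ∈ range k, (F (a i) (i + 1) - F (a i) i) := by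
  intro k
  induction k using Nat.strong_induction_on with
  | _ k ih =>
  rcases k with _ | k
  · simp
  intro hk
  obtain ⟨m, hmk, hblock, hstep⟩ := h k hk
  have hsum : ∑ i ∈ Ico m (k + 1), (F (a i) (i + 1) - F (a i) i) =
      F (a k) (k + 1) - F (a k) m := by
    rw [← sum_Ico_sub (F (a k)) (by omega : m ≤ k + 1)]
    refine sum_congr rfl fun i hi => ?_
    rw [mem_Ico] at hi
    rw [hblock i hi.1 (by omega)]
  rw [← sum_range_add_sum_Ico _ (by omega : m ≤ k + 1), hsum]
  linarith [ih m (by omega) (by omega)]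

theorem apply_mem_Adown_iff (σ : Equiv.Perm (Fin n)) (k : ℕ) (i : Fin n) :
    σ i ∈ Adown σ k ↔ (i : ℕ) < k := by
  simp [Adown]

theorem Adown_zero (σ : Equiv.Perm (Fin n)) : Adown σ 0 = ∅ := by
  simp [Adown]

theorem Adown_of_le (σ : Equiv.Perm (Fin n)) {k : ℕ} (hk : n ≤ k) : Adown σ k = univ := by
  ext j
  obtain ⟨i, rfl⟩ := σ.surjective j
  simpa [apply_mem_Adown_iff] using i.isLt.trans_le hk

theorem indicator_Adown_apply (σ : Equiv.Perm (Fin n)) (k : ℕ) (x : Fin n → ℝ) (i : Fin n) :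
    Set.indicator (Adown σ k) x (σ i) = if (i : ℕ) < k then x (σ i) else 0 := by
  simp [Set.indicator_apply, apply_mem_Adown_iff]

theorem mul_ind_eq_indicator (c : ℝ) (A : Finset (Fin n)) (j : Fin n) :
    c * ind A j = Set.indicator A (fun _ => c) j := by
  by_cases hj : j ∈ A <;> simp [ind, hj]

theorem add_eq_min_add_max (G : ℝ → ℝ) (a b : ℝ) : G a + G b = G (min a b) + G (max a b) := by
  rcases le_total a b with h | h
  · rw [min_eq_left h, max_eq_right h]
  · rw [min_eq_right h, max_eq_left h, add_comm]

theorem eq_add_sum_of_indicator_step {f : (Fin n → ℝ) → ℝ} {σ : Equiv.Perm (Fin n)}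
    {x : Fin n → ℝ}
    (h : ∀ k : Fin n, ∃ m ≤ k, (∀ i, m ≤ i → i ≤ k → x (σ i) = x (σ k)) ∧
      f (Set.indicator (Adown σ ((k : ℕ) + 1)) x) -
          f (Set.indicator (Adown σ ((k : ℕ) + 1)) fun _ => x (σ k)) =
        f (Set.indicator (Adown σ m) x) - f (Set.indicator (Adown σ m) fun _ => x (σ k))) :
    f x = f (fun _ => 0) + ∑ i : Fin n,
      (f (fun j => x (σ i) * ind (Adown σ ((i : ℕ) + 1)) j) -
        f (fun j => x (σ i) * ind (Adown σ (i : ℕ)) j)) := by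
  set a : ℕ → ℝ := fun i => if hi : i < n then x (σ ⟨i, hi⟩) else 0
  have ha_fin (i : Fin n) : a i = x (σ i) := dif_pos i.isLt
  have key := sum_range_eq_of_block_step (N := n) (T := fun k => f (Set.indicator (Adown σ k) x))
    (F := fun c k => f (Set.indicator (Adown σ k) fun _ => c)) (a := a) (fun k hk => by
      obtain ⟨m, hmk, hblock, hstep⟩ := h ⟨k, hk⟩
      refine ⟨m, hmk, fun i hmi hik => ?_, ?_⟩
      · have hi : i < n := by omega
        rw [ha_fin ⟨i, hi⟩, ha_fin ⟨k, hk⟩]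
        exact hblock ⟨i, hi⟩ hmi hik
      · simpa only [ha_fin ⟨k, hk⟩] using hstep) n le_rfl
  simp only [Adown_zero, Adown_of_le σ le_rfl, coe_empty, Set.indicator_empty, coe_univ,
    Set.indicator_univ] at key
  rw [key, ← Fin.sum_univ_eq_sum_range]
  simp only [ha_fin, mul_ind_eq_indicator]

theorem inRσ_const (σ : Equiv.Perm (Fin n)) (c : ℝ) : inRσ σ fun _ => c :=
  fun _ _ _ => le_rfl

theorem inRσ.indicator_Adown {σ : Equiv.Perm (Fin n)} {x : Fin n → ℝ} (hs : inRσ σ x)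
    (hx : ∀ i, x i ≤ 0) (k : ℕ) : inRσ σ (Set.indicator (Adown σ k) x) := by
  intro i j hij
  have hij' : (i : ℕ) ≤ j := hij
  simp only [indicator_Adown_apply]
  split_ifs <;> first | omega | exact hs i j hij | exact hx _ | exact le_rfl

theorem indicator_apply_mem {I : Set ℝ} (h0 : (0 : ℝ) ∈ I) {x : Fin n → ℝ} (hx : ∀ i, x i ∈ I)
    (s : Set (Fin n)) (j : Fin n) : s.indicator x j ∈ I := by
  by_cases hj : j ∈ s <;> simp [hj, hx, h0]

section

variable {I : Set ℝ} {f : (Fin n → ℝ) → ℝ} {σ : Equiv.Perm (Fin n)} {x : Fin n → ℝ}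

theorem ComonModular.indicator_step (hf : ComonModular I f) (h0 : (0 : ℝ) ∈ I)
    (hIneg : I ⊆ Set.Iic 0) (hx : ∀ i, x i ∈ I) (hs : inRσ σ x) (k : Fin n) :
    f (Set.indicator (Adown σ ((k : ℕ) + 1)) x) -
        f (Set.indicator (Adown σ ((k : ℕ) + 1)) fun _ => x (σ k)) =
      f (Set.indicator (Adown σ k) x) - f (Set.indicator (Adown σ k) fun _ => x (σ k)) := by
  have hneg (i : Fin n) : x i ≤ 0 := hIneg (hx i)
  have hmin : (fun j => min (Set.indicator (Adown σ k) x j)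
      (Set.indicator (Adown σ ((k : ℕ) + 1)) (fun _ => x (σ k)) j)) =
      Set.indicator (Adown σ ((k : ℕ) + 1)) x := by
    funext j
    obtain ⟨i, rfl⟩ := σ.surjective j
    simp only [indicator_Adown_apply]
    rcases lt_trichotomy (i : ℕ) k with h | h | h
    · have h' : (i : ℕ) < k + 1 := by omega
      simp only [h, h', if_true]
      exact min_eq_left (hs i k h.le)
    · obtain rfl : i = k := Fin.ext h
      simp [hneg]
    · have h' : ¬ (i : ℕ) < k + 1 := by omega
      simp only [h', h.not_gt, if_false, min_self]
  have hmax : (fun j => max (Set.indicator (Adown σ k) x j)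
      (Set.indicator (Adown σ ((k : ℕ) + 1)) (fun _ => x (σ k)) j)) =
      Set.indicator (Adown σ k) fun _ => x (σ k) := by
    funext j
    obtain ⟨i, rfl⟩ := σ.surjective j
    simp only [indicator_Adown_apply]
    rcases lt_trichotomy (i : ℕ) k with h | h | h
    · have h' : (i : ℕ) < k + 1 := by omega
      simp only [h, h', if_true]
      exact max_eq_right (hs i k h.le)
    · obtain rfl : i = k := Fin.ext h
      simp [hneg]
    · have h' : ¬ (i : ℕ) < k + 1 := by omega
      simp only [h', h.not_gt, if_false, max_self]
  have hmod := hf σ (Set.indicator (Adown σ k) x)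
    (Set.indicator (Adown σ ((k : ℕ) + 1)) fun _ => x (σ k)) (indicator_apply_mem h0 hx _)
    (indicator_apply_mem h0 (fun _ => hx (σ k)) _) (hs.indicator_Adown hneg k)
    ((inRσ_const σ _).indicator_Adown (fun _ => hneg _) _)
  rw [hmin, hmax] at hmod
  linarith

theorem max_indicator_Adown_eq {c : ℝ} (hc : c ≤ 0) {k : ℕ}
    (hk : ∀ i : Fin n, (i : ℕ) < k → x (σ i) ≤ c) :
    (fun j => max (Set.indicator (Adown σ k) x j) c) = Set.indicator (Adown σ k) fun _ => c := by
  funext j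
  obtain ⟨i, rfl⟩ := σ.surjective j
  simp only [indicator_Adown_apply]
  split_ifs with h
  · exact max_eq_right (hk i h)
  · exact max_eq_left hc

theorem InvHMax.indicator_step (hf : InvHMax I f) (h0 : (0 : ℝ) ∈ I)
    (hIneg : I ⊆ Set.Iic 0) (hx : ∀ i, x i ∈ I) (hs : inRσ σ x) (k : Fin n) :
    ∃ m ≤ k, (∀ i, m ≤ i → i ≤ k → x (σ i) = x (σ k)) ∧
      f (Set.indicator (Adown σ ((k : ℕ) + 1)) x) -
          f (Set.indicator (Adown σ ((k : ℕ) + 1)) fun _ => x (σ k)) =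
        f (Set.indicator (Adown σ m) x) - f (Set.indicator (Adown σ m) fun _ => x (σ k)) := by
  set c := x (σ k)
  have hc : c ≤ 0 := hIneg (hx _)
  set S := univ.filter fun i => c ≤ x (σ i)
  have hkS : k ∈ S := mem_filter.mpr ⟨mem_univ _, le_rfl⟩
  set m := S.min' ⟨k, hkS⟩
  have hlt (i : Fin n) (hi : i < m) : x (σ i) < c :=
    not_le.mp fun h => (S.min'_le i (by simp [S, h])).not_gt hi
  have hge (i : Fin n) (hi : m ≤ i) : c ≤ x (σ i) :=
    (mem_filter.mp (S.min'_mem _)).2.trans (hs m i hi)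
  have hcut (j : Fin n) : (if c ≤ Set.indicator (Adown σ ((k : ℕ) + 1)) x j then 0
      else Set.indicator (Adown σ ((k : ℕ) + 1)) x j) = Set.indicator (Adown σ m) x j := by
    obtain ⟨i, rfl⟩ := σ.surjective j
    simp only [indicator_Adown_apply]
    by_cases him : i < m
    · have hik : (i : ℕ) < k + 1 := by have := S.min'_le k hkS; omega
      rw [if_pos hik, if_neg (hlt i him).not_ge, if_pos (show (i : ℕ) < m from him)]
    · rw [if_neg (show ¬ (i : ℕ) < m from him)]
      split_ifs with _ hcx <;> first | rfl | exact absurd (hge i (not_lt.mp him)) hcx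
  have hinv := hf (Set.indicator (Adown σ ((k : ℕ) + 1)) x) (indicator_apply_mem h0 hx _) c (hx _)
  simp only [hcut] at hinv
  rw [max_indicator_Adown_eq hc fun i hi => hs i k (by omega),
    max_indicator_Adown_eq hc fun i hi => (hlt i hi).le] at hinv
  exact ⟨m, S.min'_le k hkS, fun i hmi hik => le_antisymm (hs i k hik) (hge i hmi), hinv⟩

end

variable {I : Set ℝ} {f : (Fin n → ℝ) → ℝ}

theorem ComonModular.eq_add_sum (hf : ComonModular I f) (h0 : (0 : ℝ) ∈ I)
    (hIneg : I ⊆ Set.Iic 0) (σ : Equiv.Perm (Fin n)) (x : Fin n → ℝ) (hx : ∀ i, x i ∈ I)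
    (hs : inRσ σ x) :
    f x = f (fun _ => 0) + ∑ i : Fin n,
      (f (fun j => x (σ i) * ind (Adown σ ((i : ℕ) + 1)) j) -
        f (fun j => x (σ i) * ind (Adown σ (i : ℕ)) j)) :=
  eq_add_sum_of_indicator_step fun k =>
    ⟨k, le_rfl, fun i hki hik => by rw [le_antisymm hik hki],
      hf.indicator_step h0 hIneg hx hs k⟩

theorem comonModular_of_eq_add_sum {g : (Fin n → ℝ) → ℝ}
    (hg : ∀ σ : Equiv.Perm (Fin n), ∀ x : Fin n → ℝ, (∀ i, x i ∈ I) → inRσ σ x →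
      f x = g (fun _ => 0) + ∑ i : Fin n,
        (g (fun j => x (σ i) * ind (Adown σ ((i : ℕ) + 1)) j) -
          g (fun j => x (σ i) * ind (Adown σ (i : ℕ)) j))) :
    ComonModular I f := by
  intro σ x y hx hy hsx hsy
  have hmin : inRσ σ fun i => min (x i) (y i) := fun i j hij =>
    min_le_min (hsx i j hij) (hsy i j hij)
  have hmax : inRσ σ fun i => max (x i) (y i) := fun i j hij =>
    max_le_max (hsx i j hij) (hsy i j hij)
  rw [hg σ x hx hsx, hg σ y hy hsy, hg σ _ (fun i => min_rec' (· ∈ I) (hx i) (hy i)) hmin,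
    hg σ _ (fun i => max_rec' (· ∈ I) (hx i) (hy i)) hmax, add_add_add_comm, ← sum_add_distrib,
    add_add_add_comm, ← sum_add_distrib]
  congr 1
  exact sum_congr rfl fun i _ => add_eq_min_add_max (fun c =>
    g (fun j => c * ind (Adown σ ((i : ℕ) + 1)) j) - g (fun j => c * ind (Adown σ (i : ℕ)) j)) _ _

theorem InvHMax.comonModular (hf : InvHMax I f) (h0 : (0 : ℝ) ∈ I) (hIneg : I ⊆ Set.Iic 0) :
    ComonModular I f :=
  comonModular_of_eq_add_sum fun _ _ hx hs =>
    eq_add_sum_of_indicator_step (hf.indicator_step h0 hIneg hx hs)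

theorem ComonModular.invHMax (hf : ComonModular I f) (hI : I.OrdConnected) (h0 : (0 : ℝ) ∈ I)
    (hIneg : I ⊆ Set.Iic 0) : InvHMax I f := by
  intro x hx c hc
  have hc0 : c ≤ 0 := hIneg hc
  have hneg (i : Fin n) : x i ≤ 0 := hIneg (hx i)
  set σ := Tuple.sort x
  have hsx : inRσ σ x := fun i j hij => Tuple.monotone_sort x hij
  have hmod := hf σ (fun i => max (x i) c) (fun i => if c ≤ x i then 0 else x i)
    (fun i => hI.out hc h0 ⟨le_max_right _ _, max_le (hneg i) hc0⟩)
    (fun i => by split_ifs; exacts [h0, hx i])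
    (fun i j hij => max_le_max (hsx i j hij) le_rfl)
    (fun i j hij => by
      dsimp only
      split_ifs <;> linarith [hsx i j hij, hneg (σ i)])
  have hmin : (fun i => min (max (x i) c) (if c ≤ x i then 0 else x i)) = x := by
    funext i
    split_ifs with h
    · rw [max_eq_left h, min_eq_left (hneg i)]
    · rw [max_eq_right (not_le.mp h).le, min_eq_right (not_le.mp h).le]
  have hmax : (fun i => max (max (x i) c) (if c ≤ x i then 0 else x i)) =
      fun i => max (if c ≤ x i then 0 else x i) c := by
    funext i
    split_ifs with h
    · rw [max_eq_left h, max_eq_right (hneg i), max_eq_left hc0]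
    · rw [max_eq_right (not_le.mp h).le, max_eq_left (not_le.mp h).le]
  rw [hmin, hmax] at hmod
  linarith

end

/-- For `I ⊆ ℝ₋` an interval containing `0` and `f : Iⁿ → ℝ`, TFAE:
(i) `f` is comonotonically modular; (ii) `f` is invariant under horizontal
max-differences; (iii) there is `g : Iⁿ → ℝ` with
`f(x) = g(0) + Σᵢ (g(x_{σ(i)}·1_{A_σ^↓(i)}) − g(x_{σ(i)}·1_{A_σ^↓(i−1)}))` on each `Iⁿ_σ`;
moreover, in (iii) one can choose `g = f`. -/
theorem stmt10 {n : ℕ} (I : Set ℝ) (hI : I.OrdConnected) (h0 : (0 : ℝ) ∈ I)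
    (hIneg : I ⊆ Set.Iic (0 : ℝ)) (f : (Fin n → ℝ) → ℝ) :
    (ComonModular I f ↔ InvHMax I f) ∧
    (ComonModular I f ↔ ∃ g : (Fin n → ℝ) → ℝ,
      ∀ σ : Equiv.Perm (Fin n), ∀ x : Fin n → ℝ, (∀ i, x i ∈ I) → inRσ σ x →
        f x = g (fun _ => 0) + ∑ i : Fin n,
          (g (fun j => x (σ i) * ind (Adown σ ((i : ℕ) + 1)) j) -
           g (fun j => x (σ i) * ind (Adown σ (i : ℕ)) j))) ∧
    (ComonModular I f →
      ∀ σ : Equiv.Perm (Fin n), ∀ x : Fin n → ℝ, (∀ i, x i ∈ I) → inRσ σ x →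
        f x = f (fun _ => 0) + ∑ i : Fin n,
          (f (fun j => x (σ i) * ind (Adown σ ((i : ℕ) + 1)) j) -
           f (fun j => x (σ i) * ind (Adown σ (i : ℕ)) j))) := by
  exact ⟨⟨fun hf => hf.invHMax hI h0 hIneg, fun hf => hf.comonModular h0 hIneg⟩,
    ⟨fun hf => ⟨f, hf.eq_add_sum h0 hIneg⟩, fun ⟨_, hg⟩ => comonModular_of_eq_add_sum hg⟩,
    fun hf => hf.eq_add_sum h0 hIneg⟩
end

section
/- Let I be a real interval containing 0 and let f : Iⁿ → ℝ. Then the following are equivalent: (i) f is comonotonically modular; (ii) the restrictions of f to I₊ⁿ and to I₋ⁿ are comonotonically modular and f_0(x) = f_0(x⁺) + f_0(−x⁻) for every x ∈ Iⁿ, where f_0 = f − f(0,…,0); (iii) there exist functions g : I₊ⁿ → ℝ and h : I₋ⁿ → ℝ such that for every permutation σ of [n] and every x ∈ Iⁿ ∩ ℝⁿ_σ, f_0(x) = Σ_{i=1}^{p} (h(x_{σ(i)}·1_{A_σ^↓(i)}) − h(x_{σ(i)}·1_{A_σ^↓(i−1)})) + Σ_{i=p+1}^{n} (g(x_{σ(i)}·1_{A_σ^↑(i)})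 − g(x_{σ(i)}·1_{A_σ^↑(i+1)})), where p ∈ {0,…,n} is such that x_{σ(p)} < 0 ≤ x_{σ(p+1)}. Moreover, in (ii) and (iii) one can choose g and h to be the restrictions of f to I₊ⁿ and I₋ⁿ. -/
open Finset

/-!
Fix σ with `x ∈ ℝⁿ_σ` and write `x·1_A` for `x` with the coordinates outside `A` set to `0`
(`maskUp`, `maskDown`). Since `x` and `0` are comonotonic, `f x + f 0 = f (x ⊓ 0) + f (x ⊔ 0)`.
Now `x ⊔ 0 = x·1_{A↑(p)}` is reached from `0 = x·1_{A↑(n)}` by switching on the coordinates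
`σ (n-1), σ (n-2), …` one at a time, and each switch is one instance of comonotonic modularity:
`x·1_{A↑(k+1)}` and `x_{σ k}·1_{A↑(k)}` are comonotonic, with meet `x_{σ k}·1_{A↑(k+1)}` and
join `x·1_{A↑(k)}`. Symmetrically for `x ⊓ 0 = x·1_{A↓(p)}`, so `f x - f 0` telescopes into the
stated sum. Conversely, on `Iⁿ ∩ ℝⁿ_σ` the `i`-th summand of that sum depends only on `x (σ i)`,
and every function `φ` of one real variable satisfies `φ a + φ b = φ (a ⊓ b) + φ (a ⊔ b)`.
Positive and negative parts commute with `⊓` and `⊔`, which gives the equivalence with the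
conditions on `I₊ⁿ` and `I₋ⁿ`.
-/

theorem apply_min_add_apply_max {α β : Type*} [LinearOrder α] [AddCommMagma β] (φ : α → β)
    (a b : α) : φ (min a b) + φ (max a b) = φ a + φ b := by
  rcases le_total a b with h | h <;> simp [h, add_comm]

theorem Finset.sum_range_ite_telescope {M : Type*} [AddCommGroup M] (F G : ℕ → M) {p n : ℕ}
    (hp : p ≤ n) :
    ∑ i ∈ range n, (if i < p then F (i + 1) - F i else G i - G (i + 1)) =
      (F p - F 0) + (G p - G n) := by
  rw [← sum_range_add_sum_Ico _ hp, sum_congr rfl fun i hi => if_pos (mem_range.1 hi),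
    sum_congr rfl fun i hi => if_neg (not_lt.2 (mem_Ico.1 hi).1), sum_range_sub,
    ← neg_sub (G n), ← sum_Ico_sub G hp, ← sum_neg_distrib]
  simp only [neg_sub]

section

variable {n : ℕ}

namespace inRσ

variable {σ : Equiv.Perm (Fin n)} {x y : Fin n → ℝ}

theorem const (σ : Equiv.Perm (Fin n)) (c : ℝ) : inRσ σ fun _ => c :=
  fun _ _ _ => le_rfl

protected theorem min (hx : inRσ σ x) (hy : inRσ σ y) : inRσ σ fun i => min (x i) (y i) :=
  fun i j hij => min_le_min (hx i j hij) (hy i j hij)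

protected theorem max (hx : inRσ σ x) (hy : inRσ σ y) : inRσ σ fun i => max (x i) (y i) :=
  fun i j hij => max_le_max (hx i j hij) (hy i j hij)

theorem exists_perm (x : Fin n → ℝ) : ∃ σ : Equiv.Perm (Fin n), inRσ σ x :=
  ⟨Tuple.sort x, fun _ _ hij => Tuple.monotone_sort x hij⟩

theorem exists_split (hx : inRσ σ x) :
    ∃ p ≤ n, (∀ i : Fin n, (i : ℕ) < p → x (σ i) < 0) ∧ ∀ i : Fin n, p ≤ (i : ℕ) → 0 ≤ x (σ i) := by
  classical
  have hex : ∃ p ≤ n, ∀ i : Fin n, p ≤ (i : ℕ) → 0 ≤ x (σ i) :=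
    ⟨n, le_rfl, fun i hi => absurd i.isLt (not_lt.2 hi)⟩
  refine ⟨Nat.find hex, (Nat.find_spec hex).1, fun i hi => ?_, (Nat.find_spec hex).2⟩
  by_contra! hxi
  exact Nat.find_min hex hi ⟨i.isLt.le, fun j hj => hxi.trans (hx i j hj)⟩

end inRσ

theorem mul_ind_mem {I : Set ℝ} {a : ℝ} (ha : a ∈ I) (h0 : (0 : ℝ) ∈ I) (A : Finset (Fin n))
    (j : Fin n) : a * ind A j ∈ I := by
  unfold ind; split_ifs <;> simpa

theorem ind_Aup_apply (σ : Equiv.Perm (Fin n)) (k : ℕ) (i : Fin n) :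
    ind (Aup σ k) (σ i) = if k ≤ (i : ℕ) then 1 else 0 := by
  simp [ind, Aup]

theorem ind_Adown_apply (σ : Equiv.Perm (Fin n)) (k : ℕ) (i : Fin n) :
    ind (Adown σ k) (σ i) = if (i : ℕ) < k then 1 else 0 := by
  simp [ind, Adown]

def maskUp (σ : Equiv.Perm (Fin n)) (x : Fin n → ℝ) (k : ℕ) : Fin n → ℝ :=
  fun j => x j * ind (Aup σ k) j

def maskDown (σ : Equiv.Perm (Fin n)) (x : Fin n → ℝ) (k : ℕ) : Fin n → ℝ :=
  fun j => x j * ind (Adown σ k) j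

section Masks

variable {σ : Equiv.Perm (Fin n)} {x : Fin n → ℝ}

theorem maskUp_apply_perm (σ : Equiv.Perm (Fin n)) (x : Fin n → ℝ) (k : ℕ) (i : Fin n) :
    maskUp σ x k (σ i) = if k ≤ (i : ℕ) then x (σ i) else 0 := by
  simp [maskUp, ind_Aup_apply]

theorem maskDown_apply_perm (σ : Equiv.Perm (Fin n)) (x : Fin n → ℝ) (k : ℕ) (i : Fin n) :
    maskDown σ x k (σ i) = if (i : ℕ) < k then x (σ i) else 0 := by
  simp [maskDown, ind_Adown_apply]

theorem maskUp_length (σ : Equiv.Perm (Fin n)) (x : Fin n → ℝ) : maskUp σ x n = 0 :=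
  funext <| σ.surjective.forall.2 fun i => by simp [maskUp_apply_perm, i.isLt]

theorem maskDown_zero (σ : Equiv.Perm (Fin n)) (x : Fin n → ℝ) : maskDown σ x 0 = 0 :=
  funext <| σ.surjective.forall.2 fun i => by simp [maskDown_apply_perm]

theorem mem_maskUp {I : Set ℝ} (hx : ∀ i, x i ∈ I) (h0 : (0 : ℝ) ∈ I) (k : ℕ) (j : Fin n) :
    maskUp σ x k j ∈ I :=
  mul_ind_mem (hx j) h0 _ j

theorem mem_maskDown {I : Set ℝ} (hx : ∀ i, x i ∈ I) (h0 : (0 : ℝ) ∈ I) (k : ℕ) (j : Fin n) :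
    maskDown σ x k j ∈ I :=
  mul_ind_mem (hx j) h0 _ j

theorem inRσ.maskUp {k : ℕ} (hx : inRσ σ x) (hk : ∀ i : Fin n, k ≤ (i : ℕ) → 0 ≤ x (σ i)) :
    inRσ σ (maskUp σ x k) := by
  intro i j hij
  rw [maskUp_apply_perm, maskUp_apply_perm]
  split_ifs with hi hj hj
  · exact hx i j hij
  · exact absurd (hi.trans hij) hj
  · exact hk j hj
  · exact le_rfl

theorem inRσ.maskDown {k : ℕ} (hx : inRσ σ x) (hk : ∀ i : Fin n, (i : ℕ) < k → x (σ i) ≤ 0) :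
    inRσ σ (maskDown σ x k) := by
  intro i j hij
  rw [maskDown_apply_perm, maskDown_apply_perm]
  split_ifs with hi hj hj
  · exact hx i j hij
  · exact hk i hi
  · exact absurd ((show (i : ℕ) ≤ j from hij).trans_lt hj) hi
  · exact le_rfl

theorem maskDown_eq_min_zero {p : ℕ} (hneg : ∀ i : Fin n, (i : ℕ) < p → x (σ i) < 0)
    (hpos : ∀ i : Fin n, p ≤ (i : ℕ) → 0 ≤ x (σ i)) : maskDown σ x p = fun j => min (x j) 0 :=
  funext <| σ.surjective.forall.2 fun i => by
    rw [maskDown_apply_perm]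
    split_ifs with hi
    · exact (min_eq_left (hneg i hi).le).symm
    · exact (min_eq_right (hpos i (not_lt.1 hi))).symm

theorem maskUp_eq_max_zero {p : ℕ} (hneg : ∀ i : Fin n, (i : ℕ) < p → x (σ i) < 0)
    (hpos : ∀ i : Fin n, p ≤ (i : ℕ) → 0 ≤ x (σ i)) : maskUp σ x p = fun j => max (x j) 0 :=
  funext <| σ.surjective.forall.2 fun i => by
    rw [maskUp_apply_perm]
    split_ifs with hi
    · exact (max_eq_left (hpos i hi)).symm
    · exact (max_eq_right (hneg i (not_le.1 hi)).le).symm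

end Masks

def stepSum (g h : (Fin n → ℝ) → ℝ) (σ : Equiv.Perm (Fin n)) (x : Fin n → ℝ) (p : ℕ) : ℝ :=
  ∑ i : Fin n,
    (if (i : ℕ) < p then
      h (fun j => x (σ i) * ind (Adown σ ((i : ℕ) + 1)) j) -
      h (fun j => x (σ i) * ind (Adown σ (i : ℕ)) j)
     else
      g (fun j => x (σ i) * ind (Aup σ (i : ℕ)) j) -
      g (fun j => x (σ i) * ind (Aup σ ((i : ℕ) + 1)) j))

namespace ComonModular

variable {I : Set ℝ} {f : (Fin n → ℝ) → ℝ} {σ : Equiv.Perm (Fin n)} {x : Fin n → ℝ}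

theorem mono {J : Set ℝ} (hf : ComonModular I f) (hJ : J ⊆ I) : ComonModular J f :=
  fun σ x y hx hy => hf σ x y (fun i => hJ (hx i)) (fun i => hJ (hy i))

theorem step_up (hf : ComonModular I f) (h0 : (0 : ℝ) ∈ I) (hx : ∀ i, x i ∈ I)
    (hσ : inRσ σ x) (k : Fin n) (hk : 0 ≤ x (σ k)) :
    f (fun j => x (σ k) * ind (Aup σ k) j) - f (fun j => x (σ k) * ind (Aup σ (k + 1)) j) =
      f (maskUp σ x k) - f (maskUp σ x (k + 1)) := by
  set t := x (σ k)
  have hge : ∀ i : Fin n, (k : ℕ) ≤ i → t ≤ x (σ i) := fun i hi => hσ k i hi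
  have hmin : (fun j => min (maskUp σ x (k + 1) j) (maskUp σ (fun _ => t) k j)) =
      maskUp σ (fun _ => t) (k + 1) :=
    funext <| σ.surjective.forall.2 fun i => by simp only [maskUp_apply_perm]; grind [Fin.ext_iff]
  have hmax : (fun j => max (maskUp σ x (k + 1) j) (maskUp σ (fun _ => t) k j)) =
      maskUp σ x k :=
    funext <| σ.surjective.forall.2 fun i => by simp only [maskUp_apply_perm]; grind [Fin.ext_iff]
  have key := hf σ (maskUp σ x (k + 1)) (maskUp σ (fun _ => t) k) (mem_maskUp hx h0 _)
    (mem_maskUp (fun _ => hx (σ k)) h0 k) (hσ.maskUp fun i hi => hk.trans (hge i (by omega)))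
    ((inRσ.const σ t).maskUp fun _ _ => hk)
  rw [hmin, hmax] at key
  show f (maskUp σ (fun _ => t) k) - f (maskUp σ (fun _ => t) (k + 1)) = _
  linarith

theorem step_down (hf : ComonModular I f) (h0 : (0 : ℝ) ∈ I) (hx : ∀ i, x i ∈ I)
    (hσ : inRσ σ x) (k : Fin n) (hk : x (σ k) ≤ 0) :
    f (fun j => x (σ k) * ind (Adown σ (k + 1)) j) - f (fun j => x (σ k) * ind (Adown σ k) j) =
      f (maskDown σ x (k + 1)) - f (maskDown σ x k) := by
  set t := x (σ k)
  have hle : ∀ i : Fin n, (i : ℕ) ≤ k → x (σ i) ≤ t := fun i hi => hσ i k hi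
  have hmin : (fun j => min (maskDown σ x k j) (maskDown σ (fun _ => t) (k + 1) j)) =
      maskDown σ x (k + 1) :=
    funext <| σ.surjective.forall.2 fun i => by simp only [maskDown_apply_perm]; grind [Fin.ext_iff]
  have hmax : (fun j => max (maskDown σ x k j) (maskDown σ (fun _ => t) (k + 1) j)) =
      maskDown σ (fun _ => t) k :=
    funext <| σ.surjective.forall.2 fun i => by simp only [maskDown_apply_perm]; grind [Fin.ext_iff]
  have key := hf σ (maskDown σ x k) (maskDown σ (fun _ => t) (k + 1)) (mem_maskDown hx h0 _)
    (mem_maskDown (fun _ => hx (σ k)) h0 _) (hσ.maskDown fun i hi => (hle i hi.le).trans hk)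
    ((inRσ.const σ t).maskDown fun _ _ => hk)
  rw [hmin, hmax] at key
  show f (maskDown σ (fun _ => t) (k + 1)) - f (maskDown σ (fun _ => t) k) = _
  linarith

theorem sub_apply_zero_eq_max_add_min (hf : ComonModular I f) (h0 : (0 : ℝ) ∈ I)
    (hx : ∀ i, x i ∈ I) :
    f x - f 0 = (f (fun i => max (x i) 0) - f 0) + (f (fun i => min (x i) 0) - f 0) := by
  obtain ⟨σ, hσ⟩ := inRσ.exists_perm x
  have h := hf σ x 0 hx (fun _ => h0) hσ (inRσ.const σ 0)
  simp only [Pi.zero_apply] at h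
  linarith

theorem sub_apply_zero_eq_stepSum (hf : ComonModular I f) (h0 : (0 : ℝ) ∈ I)
    (hx : ∀ i, x i ∈ I) (hσ : inRσ σ x) {p : ℕ} (hp : p ≤ n)
    (hneg : ∀ i : Fin n, (i : ℕ) < p → x (σ i) < 0)
    (hpos : ∀ i : Fin n, p ≤ (i : ℕ) → 0 ≤ x (σ i)) :
    f x - f 0 = stepSum f f σ x p := by
  set F : ℕ → ℝ := fun k => f (maskDown σ x k)
  set G : ℕ → ℝ := fun k => f (maskUp σ x k)
  calc f x - f 0 = (F p - F 0) + (G p - G n) := by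
        simp only [F, G, maskDown_zero, maskUp_length, maskDown_eq_min_zero hneg hpos,
          maskUp_eq_max_zero hneg hpos]
        linarith [hf.sub_apply_zero_eq_max_add_min h0 hx]
    _ = ∑ i ∈ range n, if i < p then F (i + 1) - F i else G i - G (i + 1) :=
        (sum_range_ite_telescope F G hp).symm
    _ = ∑ i : Fin n, if (i : ℕ) < p then F (i + 1) - F i else G i - G (i + 1) :=
        (Fin.sum_univ_eq_sum_range (fun i => if i < p then F (i + 1) - F i else G i - G (i + 1))
          n).symm
    _ = stepSum f f σ x p := sum_congr rfl fun i _ => by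
        split_ifs with hi
        · exact (hf.step_down h0 hx hσ i (hneg i hi).le).symm
        · exact (hf.step_up h0 hx hσ i (hpos i (not_lt.1 hi))).symm

theorem of_stepSum (g h : (Fin n → ℝ) → ℝ)
    (H : ∀ σ : Equiv.Perm (Fin n), ∀ x : Fin n → ℝ, (∀ i, x i ∈ I) → inRσ σ x →
      ∀ p : ℕ, p ≤ n → (∀ i : Fin n, (i : ℕ) < p → x (σ i) < 0) →
        (∀ i : Fin n, p ≤ (i : ℕ) → 0 ≤ x (σ i)) → f x - f 0 = stepSum g h σ x p) :
    ComonModular I f := by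
  intro σ x y hx hy hσx hσy
  let T : Fin n → ℝ → ℝ := fun i t =>
    if t < 0 then
      h (fun j => t * ind (Adown σ ((i : ℕ) + 1)) j) - h (fun j => t * ind (Adown σ (i : ℕ)) j)
    else
      g (fun j => t * ind (Aup σ (i : ℕ)) j) - g (fun j => t * ind (Aup σ ((i : ℕ) + 1)) j)
  have hT : ∀ z : Fin n → ℝ, (∀ i, z i ∈ I) → inRσ σ z →
      f z - f 0 = ∑ i : Fin n, T i (z (σ i)) := by
    intro z hz hσz
    obtain ⟨p, hp, hneg, hpos⟩ := hσz.exists_split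
    refine (H σ z hz hσz p hp hneg hpos).trans (sum_congr rfl fun i _ => ?_)
    by_cases hi : (i : ℕ) < p
    · simp only [T, if_pos hi, if_pos (hneg i hi)]
    · simp only [T, if_neg hi, if_neg (not_lt.2 (hpos i (not_lt.1 hi)))]
  have hmin : ∀ i, min (x i) (y i) ∈ I := fun i => min_rec' (· ∈ I) (hx i) (hy i)
  have hmax : ∀ i, max (x i) (y i) ∈ I := fun i => max_rec' (· ∈ I) (hx i) (hy i)
  have hsum : ∑ i : Fin n, T i (min (x (σ i)) (y (σ i))) +
      ∑ i : Fin n, T i (max (x (σ i)) (y (σ i))) =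
      ∑ i : Fin n, T i (x (σ i)) + ∑ i : Fin n, T i (y (σ i)) := by
    simp only [← sum_add_distrib, apply_min_add_apply_max]
  linarith [hT x hx hσx, hT y hy hσy, hT _ hmin (hσx.min hσy), hT _ hmax (hσx.max hσy)]

theorem of_pos_neg (h0 : (0 : ℝ) ∈ I) (hpos : ComonModular (I ∩ Set.Ici 0) f)
    (hneg : ComonModular (I ∩ Set.Iic 0) f)
    (hdecomp : ∀ x : Fin n → ℝ, (∀ i, x i ∈ I) →
      f x - f 0 = (f (fun i => max (x i) 0) - f 0) + (f (fun i => min (x i) 0) - f 0)) :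
    ComonModular I f := by
  intro σ x y hx hy hσx hσy
  have hmax_mem : ∀ {a : ℝ}, a ∈ I → max a 0 ∈ I ∩ Set.Ici 0 := fun ha =>
    ⟨max_rec' (· ∈ I) ha h0, Set.mem_Ici.2 (le_max_right _ _)⟩
  have hmin_mem : ∀ {a : ℝ}, a ∈ I → min a 0 ∈ I ∩ Set.Iic 0 := fun ha =>
    ⟨min_rec' (· ∈ I) ha h0, Set.mem_Iic.2 (min_le_right _ _)⟩
  have hp := hpos σ _ _ (fun i => hmax_mem (hx i)) (fun i => hmax_mem (hy i))
    (hσx.max (inRσ.const σ 0)) (hσy.max (inRσ.const σ 0))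
  have hn := hneg σ _ _ (fun i => hmin_mem (hx i)) (fun i => hmin_mem (hy i))
    (hσx.min (inRσ.const σ 0)) (hσy.min (inRσ.const σ 0))
  simp only [← max_min_distrib_right, max_max_max_comm _ (0 : ℝ), max_self,
    min_min_min_comm _ (0 : ℝ), min_self, ← min_max_distrib_right] at hp hn
  linarith [hdecomp x hx, hdecomp y hy,
    hdecomp _ fun i => min_rec' (· ∈ I) (hx i) (hy i),
    hdecomp _ fun i => max_rec' (· ∈ I) (hx i) (hy i)]

end ComonModular

end

theorem stmt11_general {n : ℕ} (I : Set ℝ) (h0 : (0 : ℝ) ∈ I)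
    (f : (Fin n → ℝ) → ℝ) :
    (ComonModular I f ↔
      (ComonModular (I ∩ Set.Ici (0 : ℝ)) f ∧ ComonModular (I ∩ Set.Iic (0 : ℝ)) f ∧
       ∀ x : Fin n → ℝ, (∀ i, x i ∈ I) →
         f x - f (fun _ => 0) =
           (f (fun i => max (x i) 0) - f (fun _ => 0)) +
           (f (fun i => min (x i) 0) - f (fun _ => 0)))) ∧
    (ComonModular I f ↔
      ∃ g h : (Fin n → ℝ) → ℝ,
        ∀ σ : Equiv.Perm (Fin n), ∀ x : Fin n → ℝ, (∀ i, x i ∈ I) → inRσ σ x →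
          ∀ p : ℕ, p ≤ n →
            (∀ i : Fin n, (i : ℕ) < p → x (σ i) < 0) →
            (∀ i : Fin n, p ≤ (i : ℕ) → 0 ≤ x (σ i)) →
            f x - f (fun _ => 0) =
              ∑ i : Fin n,
                (if (i : ℕ) < p then
                  h (fun j => x (σ i) * ind (Adown σ ((i : ℕ) + 1)) j) -
                  h (fun j => x (σ i) * ind (Adown σ (i : ℕ)) j)
                 else
                  g (fun j => x (σ i) * ind (Aup σ (i : ℕ)) j) -
                  g (fun j => x (σ i) * ind (Aup σ ((i : ℕ) + 1)) j))) ∧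
    (ComonModular I f →
      ∀ σ : Equiv.Perm (Fin n), ∀ x : Fin n → ℝ, (∀ i, x i ∈ I) → inRσ σ x →
        ∀ p : ℕ, p ≤ n →
          (∀ i : Fin n, (i : ℕ) < p → x (σ i) < 0) →
          (∀ i : Fin n, p ≤ (i : ℕ) → 0 ≤ x (σ i)) →
          f x - f (fun _ => 0) =
            ∑ i : Fin n,
              (if (i : ℕ) < p then
                f (fun j => x (σ i) * ind (Adown σ ((i : ℕ) + 1)) j) -
                f (fun j => x (σ i) * ind (Adown σ (i : ℕ)) j)
               else
                f (fun j => x (σ i) * ind (Aup σ (i : ℕ)) j) -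
                f (fun j => x (σ i) * ind (Aup σ ((i : ℕ) + 1)) j))) := by
  have hformula : ComonModular I f → ∀ σ x, (∀ i, x i ∈ I) → inRσ σ x → ∀ p ≤ n,
      (∀ i : Fin n, (i : ℕ) < p → x (σ i) < 0) → (∀ i : Fin n, p ≤ (i : ℕ) → 0 ≤ x (σ i)) →
      f x - f 0 = stepSum f f σ x p :=
    fun hf _ _ hx hσ _ hp hneg hpos => hf.sub_apply_zero_eq_stepSum h0 hx hσ hp hneg hpos
  refine ⟨⟨fun hf => ⟨hf.mono Set.inter_subset_left, hf.mono Set.inter_subset_left,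
      fun _ hx => hf.sub_apply_zero_eq_max_add_min h0 hx⟩,
      fun ⟨hpos, hneg, hdecomp⟩ => .of_pos_neg h0 hpos hneg hdecomp⟩,
    ⟨fun hf => ⟨f, f, hformula hf⟩, fun ⟨g, h, H⟩ => .of_stepSum g h H⟩, hformula⟩

/-- For an interval `I ∋ 0` and `f : Iⁿ → ℝ`, TFAE:
(i) `f` is comonotonically modular;
(ii) the restrictions of `f` to `I₊ⁿ` and `I₋ⁿ` are comonotonically modular and
`f_0(x) = f_0(x⁺) + f_0(−x⁻)` on `Iⁿ`;
(iii) there are `g : I₊ⁿ → ℝ`, `h : I₋ⁿ → ℝ` such that, on each `Iⁿ_σ`, with `p` such that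
`x_{σ(p)} < 0 ≤ x_{σ(p+1)}`,
`f_0(x) = Σ_{i≤p} (h(x_{σ(i)}·1_{A_σ^↓(i)}) − h(x_{σ(i)}·1_{A_σ^↓(i−1)}))
        + Σ_{i>p} (g(x_{σ(i)}·1_{A_σ^↑(i)}) − g(x_{σ(i)}·1_{A_σ^↑(i+1)}))`;
moreover, in (iii) one can choose `g` and `h` to be the restrictions of `f`. -/
theorem stmt11 {n : ℕ} (I : Set ℝ) (hI : I.OrdConnected) (h0 : (0 : ℝ) ∈ I)
    (f : (Fin n → ℝ) → ℝ) :
    (ComonModular I f ↔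
      (ComonModular (I ∩ Set.Ici (0 : ℝ)) f ∧ ComonModular (I ∩ Set.Iic (0 : ℝ)) f ∧
       ∀ x : Fin n → ℝ, (∀ i, x i ∈ I) →
         f x - f (fun _ => 0) =
           (f (fun i => max (x i) 0) - f (fun _ => 0)) +
           (f (fun i => min (x i) 0) - f (fun _ => 0)))) ∧
    (ComonModular I f ↔
      ∃ g h : (Fin n → ℝ) → ℝ,
        ∀ σ : Equiv.Perm (Fin n), ∀ x : Fin n → ℝ, (∀ i, x i ∈ I) → inRσ σ x →
          ∀ p : ℕ, p ≤ n →
            (∀ i : Fin n, (i : ℕ) < p → x (σ i) < 0) →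
            (∀ i : Fin n, p ≤ (i : ℕ) → 0 ≤ x (σ i)) →
            f x - f (fun _ => 0) =
              ∑ i : Fin n,
                (if (i : ℕ) < p then
                  h (fun j => x (σ i) * ind (Adown σ ((i : ℕ) + 1)) j) -
                  h (fun j => x (σ i) * ind (Adown σ (i : ℕ)) j)
                 else
                  g (fun j => x (σ i) * ind (Aup σ (i : ℕ)) j) -
                  g (fun j => x (σ i) * ind (Aup σ ((i : ℕ) + 1)) j))) ∧
    (ComonModular I f →
      ∀ σ : Equiv.Perm (Fin n), ∀ x : Fin n → ℝ, (∀ i, x i ∈ I) → inRσ σ x →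
        ∀ p : ℕ, p ≤ n →
          (∀ i : Fin n, (i : ℕ) < p → x (σ i) < 0) →
          (∀ i : Fin n, p ≤ (i : ℕ) → 0 ≤ x (σ i)) →
          f x - f (fun _ => 0) =
            ∑ i : Fin n,
              (if (i : ℕ) < p then
                f (fun j => x (σ i) * ind (Adown σ ((i : ℕ) + 1)) j) -
                f (fun j => x (σ i) * ind (Adown σ (i : ℕ)) j)
               else
                f (fun j => x (σ i) * ind (Aup σ (i : ℕ)) j) -
                f (fun j => x (σ i) * ind (Aup σ ((i : ℕ) + 1)) j))) :=
  stmt11_general I h0 f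
end
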